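/- Let G be a topological group, N a normal subgroup of G with the induced topology, and π : G → H a relatively compact homomorphism into a Hausdorff topological group H. Then DG(π|_N) is a normal subgroup of DG(π), where π|_N is the restriction of π to N. -/

import Mathlib

/-!
`DG(π|_N)` is a closed subgroup stable under conjugation by each `π g`, because conjugation by `g`
is a continuous automorphism of `N` intertwined by `π`. Conjugation in `H` being continuous, it is
then stable under conjugation by every point of `closure (range π)`, which contains `DG(π)`.
-/

open Set Filter Topology
open scoped Pointwise

namespace MonoidHom

section DiscontinuitySet

variable {M K H : Type*} [Group M] [TopologicalSpace M] [Group K] [TopologicalSpace K]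
  [Group H] [TopologicalSpace H]

/-- The discontinuity group `DG(f)`, as a set. -/
def discontinuitySet (f : M →* H) : Set H := ⋂ V ∈ 𝓝 (1 : M), closure (f '' V)

variable {f : M →* H} {x : H}

theorem mem_discontinuitySet : x ∈ f.discontinuitySet ↔ ∀ V ∈ 𝓝 (1 : M), x ∈ closure (f '' V) :=
  mem_iInter₂

theorem isClosed_discontinuitySet : IsClosed f.discontinuitySet :=
  isClosed_biInter fun _ _ => isClosed_closure

theorem discontinuitySet_subset_closure_range : f.discontinuitySet ⊆ closure (Set.range f) :=
  fun _ hx => image_univ (f := f) ▸ mem_discontinuitySet.1 hx univ univ_mem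

theorem discontinuitySet_comp_subset (f : K →* H) {g : M →* K} (hg : ContinuousAt g 1) :
    (f.comp g).discontinuitySet ⊆ f.discontinuitySet := by
  refine fun x hx => mem_discontinuitySet.2 fun V hV => ?_
  have hV' : g ⁻¹' V ∈ 𝓝 (1 : M) := hg.preimage_mem_nhds (by rwa [map_one])
  refine closure_mono ?_ (mem_discontinuitySet.1 hx _ hV')
  rintro _ ⟨m, hm, rfl⟩
  exact ⟨g m, hm, rfl⟩

theorem conj_mem_discontinuitySet [ContinuousMul H] {φ : M →* M} (hφ : Continuous φ) {a : H}
    (hfφ : ∀ m, f (φ m) = a * f m * a⁻¹) (hx : x ∈ f.discontinuitySet) :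
    a * x * a⁻¹ ∈ f.discontinuitySet := by
  refine mem_discontinuitySet.2 fun V hV => ?_
  have hV' : φ ⁻¹' V ∈ 𝓝 (1 : M) := hφ.continuousAt.preimage_mem_nhds (by rwa [map_one])
  refine map_mem_closure (f := fun y => a * y * a⁻¹) (by fun_prop)
    (mem_discontinuitySet.1 hx _ hV') ?_
  rintro _ ⟨m, hm, rfl⟩
  exact ⟨φ m, hm, hfφ m⟩

end DiscontinuitySet

variable {M H : Type*} [Group M] [TopologicalSpace M] [IsTopologicalGroup M]
  [Group H] [TopologicalSpace H] [IsTopologicalGroup H]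

def discontinuityGroup (f : M →* H) : Subgroup H where
  carrier := f.discontinuitySet
  one_mem' := mem_discontinuitySet.2 fun V hV => subset_closure ⟨1, mem_of_mem_nhds hV, map_one f⟩
  mul_mem' {x y} hx hy := by
    refine mem_discontinuitySet.2 fun V hV => ?_
    obtain ⟨W, hW, hW1, hWW⟩ := exists_open_nhds_one_mul_subset hV
    have hWn := hW.mem_nhds hW1
    refine map_mem_closure₂ continuous_mul (mem_discontinuitySet.1 hx W hWn)
      (mem_discontinuitySet.1 hy W hWn) ?_
    rintro _ ⟨u, hu, rfl⟩ _ ⟨w, hw, rfl⟩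
    exact ⟨u * w, hWW (mul_mem_mul hu hw), map_mul f u w⟩
  inv_mem' {x} hx := by
    refine mem_discontinuitySet.2 fun V hV => ?_
    refine map_mem_closure continuous_inv (mem_discontinuitySet.1 hx _ (inv_mem_nhds_one M hV)) ?_
    rintro _ ⟨m, hm, rfl⟩
    exact ⟨m⁻¹, hm, map_inv f m⟩

end MonoidHom

open MonoidHom

theorem conj_mem_of_mem_closure_range {G H : Type*} [MulOneClass G] [Group H] [TopologicalSpace H]
    [IsTopologicalGroup H] (π : G →* H) {S : Set H} (hS : IsClosed S) {x : H}
    (hx : ∀ g, π g * x * (π g)⁻¹ ∈ S) {h : H} (hh : h ∈ closure (range π)) :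
    h * x * h⁻¹ ∈ S :=
  closure_minimal (s := range π) (t := (fun y => y * x * y⁻¹) ⁻¹' S)
    (by rintro _ ⟨g, rfl⟩; exact hx g) (hS.preimage (by fun_prop)) hh

theorem continuous_conjNormal {G : Type*} [Group G] [TopologicalSpace G] [IsTopologicalGroup G]
    (N : Subgroup G) [N.Normal] (g : G) : Continuous (MulAut.conjNormal (H := N) g) :=
  continuous_induced_rng.2 <| by simp only [Function.comp_def, MulAut.conjNormal_apply]; fun_prop

theorem stmt15_general {G H : Type*} [Group G] [TopologicalSpace G] [IsTopologicalGroup G]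
    [Group H] [TopologicalSpace H] [IsTopologicalGroup H]
    (N : Subgroup G) [N.Normal]
    (π : G →* H) :
    ((⋂ V ∈ nhds (1 : N), closure ((fun v : N => π v) '' V)) ⊆
      ⋂ U ∈ nhds (1 : G), closure (π '' U)) ∧
    (∃ S : Subgroup H,
      (S : Set H) = ⋂ V ∈ nhds (1 : N), closure ((fun v : N => π v) '' V)) ∧
    ∀ h ∈ ⋂ U ∈ nhds (1 : G), closure (π '' U),
      ∀ x ∈ ⋂ V ∈ nhds (1 : N), closure ((fun v : N => π v) '' V),
        h * x * h⁻¹ ∈ ⋂ V ∈ nhds (1 : N), closure ((fun v : N => π v) '' V) := by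
  change (π.comp N.subtype).discontinuitySet ⊆ π.discontinuitySet ∧
    (∃ S : Subgroup H, (S : Set H) = (π.comp N.subtype).discontinuitySet) ∧
    ∀ h ∈ π.discontinuitySet, ∀ x ∈ (π.comp N.subtype).discontinuitySet,
      h * x * h⁻¹ ∈ (π.comp N.subtype).discontinuitySet
  refine ⟨discontinuitySet_comp_subset π continuous_subtype_val.continuousAt,
    ⟨(π.comp N.subtype).discontinuityGroup, rfl⟩, fun h hh x hx => ?_⟩
  refine conj_mem_of_mem_closure_range π isClosed_discontinuitySet (fun g => ?_)
    (discontinuitySet_subset_closure_range hh)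
  exact conj_mem_discontinuitySet (φ := (MulAut.conjNormal g : N ≃* N).toMonoidHom)
    (continuous_conjNormal N g) (fun n => by simp [MulAut.conjNormal_apply]) hx

/-- For a normal subgroup `N` of `G` (with the induced topology) and a
relatively compact homomorphism `π : G → H`, the discontinuity group of the
restriction `π|_N` is a normal subgroup of `DG(π)`. -/
theorem stmt15 {G H : Type*} [Group G] [TopologicalSpace G] [IsTopologicalGroup G]
    [Group H] [TopologicalSpace H] [IsTopologicalGroup H] [T2Space H]
    (N : Subgroup G) [N.Normal]
    (π : G →* H)
    (hrc : ∃ U ∈ nhds (1 : G), IsCompact (closure (π '' U))) :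
    ((⋂ V ∈ nhds (1 : N), closure ((fun v : N => π v) '' V)) ⊆
      ⋂ U ∈ nhds (1 : G), closure (π '' U)) ∧
    (∃ S : Subgroup H,
      (S : Set H) = ⋂ V ∈ nhds (1 : N), closure ((fun v : N => π v) '' V)) ∧
    ∀ h ∈ ⋂ U ∈ nhds (1 : G), closure (π '' U),
      ∀ x ∈ ⋂ V ∈ nhds (1 : N), closure ((fun v : N => π v) '' V),
        h * x * h⁻¹ ∈ ⋂ V ∈ nhds (1 : N), closure ((fun v : N => π v) '' V) :=
  stmt15_general N π
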